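/- Let q, η, μ₁, μ₂, τ₁, τ₂ ∈ ℂ∖{0} with |q| < 1, μ₂ ≠ q^k μ₁ for all integers k ≥ 1, τ₁ ≠ τ₂, and |τ₁/τ₂| < |η|². Let θ(a,q) := ∏_{m=0}^∞ (1 − a q^m)(1 − q^{m+1} a⁻¹), which converges for |q| < 1 and a ≠ 0, and assume θ(μ₁τ₁,q) ≠ 0 and θ(μ₂τ₂,q) ≠ 0. Let F(z) = Σ_{k≥0} [ (η²;q)_k (η² μ₁/μ₂;q)_k / ( (q μ₁/μ₂;q)_k (q;q)_k ) ] (q η⁻² z)^k (convergent on the stated domain), and define Z(τ₁, τ₂) := [ θ(η⁻¹τ₁,q)·θ(ητ₂,q) / ( θ(μ₁τ₁,q)·θ(μ₂τ₂,q) ) ] · F(τ₁/τ₂). Then ((ητ₁ − η⁻¹τ₂)/(τ₁ − τ₂))·Z(qτ₁, τ₂) + ((ητ₂ − η⁻¹τ₁)/(τ₂ − τ₁))·Z(τ₁, qτ₂) = (μ₁ + μ₂)·Z(τ₁, τ₂), and Z(qτ₁, qτ₂) = μ₁μ₂·Z(τ₁, τ₂). -/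

import Mathlib

/-- The theta function `θ(a,q) = ∏_{m≥0} (1 − a qᵐ)(1 − q^{m+1} a⁻¹)`. -/
noncomputable def thetaFn (a q : ℂ) : ℂ :=
  ∏' m : ℕ, ((1 - a * q ^ m) * (1 - q ^ (m + 1) * a⁻¹))

/-- The q-Pochhammer symbol `(x;q)_k = ∏_{i=0}^{k-1} (1 − x qⁱ)`. -/
noncomputable def qPoch (x q : ℂ) (k : ℕ) : ℂ :=
  ∏ i ∈ Finset.range k, (1 - x * q ^ i)

/-- The vortex sum `F(z) = ₂F₁(η², η²μ₁/μ₂; qμ₁/μ₂; q; qη⁻²z)`. -/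
noncomputable def tu2VortexSum (q η μ₁ μ₂ z : ℂ) : ℂ :=
  ∑' k : ℕ, qPoch (η ^ 2) q k * qPoch (η ^ 2 * μ₁ / μ₂) q k /
    (qPoch (q * μ₁ / μ₂) q k * qPoch q q k) * (q * (η ^ 2)⁻¹ * z) ^ k

/-- The theta-dressed holomorphic block of `T[U(2)]`:
`Z(τ₁,τ₂) = θ(η⁻¹τ₁,q) θ(ητ₂,q) / (θ(μ₁τ₁,q) θ(μ₂τ₂,q)) · F(τ₁/τ₂)`. -/
noncomputable def tu2Block (q η μ₁ μ₂ τ₁ τ₂ : ℂ) : ℂ :=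
  thetaFn (η⁻¹ * τ₁) q * thetaFn (η * τ₂) q /
      (thetaFn (μ₁ * τ₁) q * thetaFn (μ₂ * τ₂) q) *
    tu2VortexSum q η μ₁ μ₂ (τ₁ / τ₂)

/-!
Quasi-periodicity `θ(qa, q) = -a⁻¹ θ(a, q)` shows that the theta prefactor of `Z` picks up
the factor `μ₁η` under `τ₁ ↦ qτ₁` and `μ₂η⁻¹` under `τ₂ ↦ qτ₂`; this gives the second equation.
After dividing by the prefactor and multiplying by `(τ₁ - τ₂)/τ₂`, the first equation becomes,
in the variable `x = η⁻²τ₁/τ₂`,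
`μ₁ (η⁴x - 1) φ(q²x) + μ₂ (x - 1) φ(x) = (μ₁ + μ₂) (η²x - 1) φ(qx)`
for `φ = ₂φ₁(η², η²μ₁/μ₂; qμ₁/μ₂; q; ·)`. This is Heine's q-difference equation for `₂φ₁`,
which reduces, coefficient by coefficient, to the ratio of consecutive terms of the series.
-/

open Filter Topology

/-- The infinite q-Pochhammer symbol `(x;q)_∞`. -/
noncomputable def qPochInf (x q : ℂ) : ℂ :=
  ∏' m : ℕ, (1 - x * q ^ m)

section Theta

variable {a q : ℂ}

lemma multipliable_one_sub_mul_pow (x : ℂ) (hq : ‖q‖ < 1) :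
    Multipliable fun m : ℕ => 1 - x * q ^ m := by
  have hsum : Summable fun m : ℕ => ‖-(x * q ^ m)‖ := by
    simpa [norm_pow] using (summable_geometric_of_lt_one (norm_nonneg q) hq).mul_left ‖x‖
  simpa [sub_eq_add_neg] using multipliable_one_add_of_summable hsum

lemma qPochInf_eq_one_sub_mul (x : ℂ) (hq : ‖q‖ < 1) :
    qPochInf x q = (1 - x) * qPochInf (q * x) q := by
  have hshift : Multipliable fun m : ℕ => 1 - x * q ^ (m + 1) :=
    (multipliable_one_sub_mul_pow (q * x) hq).congr fun m => by ring
  unfold qPochInf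
  rw [tprod_eq_zero_mul' (f := fun m : ℕ => 1 - x * q ^ m) hshift, pow_zero, mul_one]
  congr 1
  exact tprod_congr fun m => by ring

lemma thetaFn_eq_qPochInf_mul (a : ℂ) (hq : ‖q‖ < 1) :
    thetaFn a q = qPochInf a q * qPochInf (q * a⁻¹) q := by
  rw [thetaFn, qPochInf, qPochInf, ← (multipliable_one_sub_mul_pow a hq).tprod_mul
    (multipliable_one_sub_mul_pow _ hq)]
  exact tprod_congr fun m => by ring

lemma thetaFn_q_mul (ha : a ≠ 0) (hq0 : q ≠ 0) (hq : ‖q‖ < 1) :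
    thetaFn (q * a) q = -a⁻¹ * thetaFn a q := by
  rw [thetaFn_eq_qPochInf_mul _ hq, thetaFn_eq_qPochInf_mul _ hq,
    qPochInf_eq_one_sub_mul a hq, qPochInf_eq_one_sub_mul (q * (q * a)⁻¹) hq]
  have hinv : q * (q * a)⁻¹ = a⁻¹ := by field_simp
  rw [hinv]
  field_simp
  ring

lemma thetaFn_mul_q_mul_div {u w σ : ℂ} (hu : u ≠ 0) (hw : w ≠ 0) (hσ : σ ≠ 0) (hq0 : q ≠ 0)
    (hq : ‖q‖ < 1) :
    thetaFn (u * (q * σ)) q / thetaFn (w * (q * σ)) q =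
      w / u * (thetaFn (u * σ) q / thetaFn (w * σ) q) := by
  rw [mul_left_comm u, mul_left_comm w, thetaFn_q_mul (mul_ne_zero hu hσ) hq0 hq,
    thetaFn_q_mul (mul_ne_zero hw hσ) hq0 hq, mul_div_mul_comm, neg_div_neg_eq, inv_div_inv,
    mul_div_mul_right _ _ hσ]

end Theta

noncomputable def qHypergeometricTerm (a b c q x : ℂ) (k : ℕ) : ℂ :=
  qPoch a q k * qPoch b q k / (qPoch c q k * qPoch q q k) * x ^ k

/-- The basic hypergeometric series `₂φ₁(a, b; c; q; x)`. -/
noncomputable def qHypergeometric (a b c q x : ℂ) : ℂ :=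
  ∑' k : ℕ, qHypergeometricTerm a b c q x k

noncomputable def qHypergeometricRatio (a b c q : ℂ) (k : ℕ) : ℂ :=
  (1 - a * q ^ k) * (1 - b * q ^ k) / ((1 - c * q ^ k) * (1 - q * q ^ k))

section Hypergeometric

variable {a b c q x : ℂ}

lemma qPoch_succ (x q : ℂ) (k : ℕ) : qPoch x q (k + 1) = qPoch x q k * (1 - x * q ^ k) :=
  Finset.prod_range_succ _ _

lemma one_sub_mul_pow_self_ne_zero (hq : ‖q‖ < 1) (k : ℕ) : 1 - q * q ^ k ≠ 0 := by
  have hlt : ‖q * q ^ k‖ < 1 := by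
    rw [← pow_succ', norm_pow]
    exact pow_lt_one₀ (norm_nonneg q) hq k.succ_ne_zero
  intro h
  rw [← eq_of_sub_eq_zero h, norm_one] at hlt
  exact lt_irrefl _ hlt

lemma qHypergeometricTerm_zero (a b c q x : ℂ) : qHypergeometricTerm a b c q x 0 = 1 := by
  simp [qHypergeometricTerm, qPoch]

lemma qHypergeometricTerm_succ (a b c q x : ℂ) (k : ℕ) :
    qHypergeometricTerm a b c q x (k + 1) =
      qHypergeometricTerm a b c q x k * (qHypergeometricRatio a b c q k * x) := by
  simp only [qHypergeometricTerm, qPoch_succ, qHypergeometricRatio, pow_succ]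
  rw [mul_mul_mul_comm, mul_mul_mul_comm (qPoch c q k), mul_div_mul_comm]
  ring

lemma qHypergeometricTerm_q_mul (a b c q x : ℂ) (k : ℕ) :
    qHypergeometricTerm a b c q (q * x) k = q ^ k * qHypergeometricTerm a b c q x k := by
  simp only [qHypergeometricTerm, mul_pow]
  ring

lemma tendsto_qHypergeometricRatio (a b c : ℂ) (hq : ‖q‖ < 1) :
    Tendsto (qHypergeometricRatio a b c q) atTop (𝓝 1) := by
  have hpow : Tendsto (fun k : ℕ => q ^ k) atTop (𝓝 0) :=
    tendsto_pow_atTop_nhds_zero_of_norm_lt_one hq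
  have hfactor : ∀ y : ℂ, Tendsto (fun k : ℕ => 1 - y * q ^ k) atTop (𝓝 1) := fun y => by
    simpa using tendsto_const_nhds.sub (hpow.const_mul y)
  have h := ((hfactor a).mul (hfactor b)).div ((hfactor c).mul (hfactor q)) (by norm_num)
  rwa [mul_one, div_one] at h

lemma summable_qHypergeometricTerm (a b c : ℂ) (hq : ‖q‖ < 1) (hx : ‖x‖ < 1) :
    Summable (qHypergeometricTerm a b c q x) := by
  obtain ⟨r, hxr, hr⟩ := exists_between hx
  refine summable_of_ratio_norm_eventually_le hr ?_
  have hratio : ∀ᶠ k in atTop, ‖qHypergeometricRatio a b c q k * x‖ < r := by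
    refine ((tendsto_qHypergeometricRatio a b c hq).mul_const x).norm.eventually_lt_const ?_
    simpa using hxr
  filter_upwards [hratio] with k hk
  rw [qHypergeometricTerm_succ, norm_mul, mul_comm]
  exact mul_le_mul_of_nonneg_right hk.le (norm_nonneg _)

lemma qHypergeometricTerm_qDifference_succ {k : ℕ} (hck : 1 - c * q ^ k ≠ 0)
    (hqk : 1 - q * q ^ k ≠ 0) :
    q * qHypergeometricTerm a b c q x (k + 1) -
        (q + c) * qHypergeometricTerm a b c q (q * x) (k + 1) +
        c * qHypergeometricTerm a b c q (q * (q * x)) (k + 1) =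
      q * x * (qHypergeometricTerm a b c q x k -
        (a + b) * qHypergeometricTerm a b c q (q * x) k +
        a * b * qHypergeometricTerm a b c q (q * (q * x)) k) := by
  have hratio : qHypergeometricRatio a b c q k * ((1 - c * q ^ k) * (1 - q * q ^ k)) =
      (1 - a * q ^ k) * (1 - b * q ^ k) :=
    div_mul_cancel₀ _ (mul_ne_zero hck hqk)
  simp only [qHypergeometricTerm_q_mul, qHypergeometricTerm_succ]
  linear_combination q * x * qHypergeometricTerm a b c q x k * hratio

theorem qHypergeometric_qDifference (hq : ‖q‖ < 1) (hc : ∀ k : ℕ, 1 - c * q ^ k ≠ 0)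
    (hx : ‖x‖ < 1) :
    q * qHypergeometric a b c q x - (q + c) * qHypergeometric a b c q (q * x) +
        c * qHypergeometric a b c q (q * (q * x)) =
      q * x * (qHypergeometric a b c q x - (a + b) * qHypergeometric a b c q (q * x) +
        a * b * qHypergeometric a b c q (q * (q * x))) := by
  have hqx : ‖q * x‖ < 1 := by
    rw [norm_mul]; exact mul_lt_one_of_nonneg_of_lt_one_left (norm_nonneg q) hq hx.le
  have hqqx : ‖q * (q * x)‖ < 1 := by
    rw [norm_mul]; exact mul_lt_one_of_nonneg_of_lt_one_left (norm_nonneg q) hq hqx.le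
  have h₀ := (summable_qHypergeometricTerm a b c hq hx).hasSum
  have h₁ := (summable_qHypergeometricTerm a b c hq hqx).hasSum
  have h₂ := (summable_qHypergeometricTerm a b c hq hqqx).hasSum
  have hL := (hasSum_nat_add_iff' 1).mpr (((h₀.mul_left q).sub (h₁.mul_left (q + c))).add
    (h₂.mul_left c))
  have hR := ((h₀.sub (h₁.mul_left (a + b))).add (h₂.mul_left (a * b))).mul_left (q * x)
  -- the `k = 0` term on the left vanishes, and the `(k+1)`-st is the `k`-th term on the right
  rw [Finset.sum_range_one, qHypergeometricTerm_zero, qHypergeometricTerm_zero,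
    qHypergeometricTerm_zero, show q * 1 - (q + c) * 1 + c * 1 = 0 by ring, sub_zero] at hL
  exact (hL.congr_fun fun k => (qHypergeometricTerm_qDifference_succ (hc k)
    (one_sub_mul_pow_self_ne_zero hq k)).symm).unique hR

end Hypergeometric

section TU2

variable {q η μ₁ μ₂ : ℂ}

lemma tu2VortexSum_eq_qHypergeometric (q η μ₁ μ₂ z : ℂ) :
    tu2VortexSum q η μ₁ μ₂ z =
      qHypergeometric (η ^ 2) (η ^ 2 * μ₁ / μ₂) (q * μ₁ / μ₂) q (q * (η ^ 2)⁻¹ * z) :=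
  rfl

lemma tu2Block_eq (q η μ₁ μ₂ σ₁ σ₂ : ℂ) :
    tu2Block q η μ₁ μ₂ σ₁ σ₂ =
      thetaFn (η⁻¹ * σ₁) q / thetaFn (μ₁ * σ₁) q * (thetaFn (η * σ₂) q / thetaFn (μ₂ * σ₂) q) *
        tu2VortexSum q η μ₁ μ₂ (σ₁ / σ₂) := by
  rw [tu2Block, mul_div_mul_comm]

lemma tu2VortexSum_qDifference (hq0 : q ≠ 0) (hq : ‖q‖ < 1) (hη : η ≠ 0) (hμ₂ : μ₂ ≠ 0)
    (hμ : ∀ k : ℕ, 1 ≤ k → μ₂ ≠ q ^ k * μ₁) {z : ℂ} (hz : ‖z‖ < ‖η ^ 2‖) :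
    μ₁ * (η ^ 2 * z - 1) * tu2VortexSum q η μ₁ μ₂ (q * z) +
        μ₂ * ((η ^ 2)⁻¹ * z - 1) * tu2VortexSum q η μ₁ μ₂ (z / q) =
      (μ₁ + μ₂) * (z - 1) * tu2VortexSum q η μ₁ μ₂ z := by
  have hη2 : η ^ 2 ≠ 0 := pow_ne_zero 2 hη
  obtain ⟨x, rfl⟩ : ∃ x, z = η ^ 2 * x := ⟨(η ^ 2)⁻¹ * z, by field_simp⟩
  have hx : ‖x‖ < 1 := by
    rw [norm_mul] at hz
    exact (mul_lt_iff_lt_one_right (norm_pos_iff.mpr hη2)).mp hz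
  have hc : ∀ k : ℕ, 1 - q * μ₁ / μ₂ * q ^ k ≠ 0 := fun k h => by
    refine hμ (k + 1) k.succ_pos ?_
    field_simp at h
    linear_combination h
  have hφ := qHypergeometric_qDifference (a := η ^ 2) (b := η ^ 2 * μ₁ / μ₂) hq hc hx
  simp only [tu2VortexSum_eq_qHypergeometric]
  rw [show q * (η ^ 2)⁻¹ * (q * (η ^ 2 * x)) = q * (q * x) by field_simp,
    show q * (η ^ 2)⁻¹ * (η ^ 2 * x / q) = x by field_simp,
    show q * (η ^ 2)⁻¹ * (η ^ 2 * x) = q * x by field_simp, inv_mul_cancel_left₀ hη2]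
  linear_combination (norm := skip) (-(μ₂ / q)) * hφ
  field_simp
  ring

end TU2

theorem tu2_block_tRS_eigenfunction_general (q η μ₁ μ₂ τ₁ τ₂ : ℂ)
    (hq0 : q ≠ 0) (hq : ‖q‖ < 1) (hη : η ≠ 0)
    (hμ₁ : μ₁ ≠ 0) (hμ₂ : μ₂ ≠ 0) (hτ₁ : τ₁ ≠ 0) (hτ₂ : τ₂ ≠ 0)
    (hμ : ∀ k : ℕ, 1 ≤ k → μ₂ ≠ q ^ k * μ₁) (hττ : τ₁ ≠ τ₂)
    (hdom : ‖τ₁ / τ₂‖ < ‖η ^ 2‖) :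
    (η * τ₁ - η⁻¹ * τ₂) / (τ₁ - τ₂) * tu2Block q η μ₁ μ₂ (q * τ₁) τ₂ +
        (η * τ₂ - η⁻¹ * τ₁) / (τ₂ - τ₁) * tu2Block q η μ₁ μ₂ τ₁ (q * τ₂) =
      (μ₁ + μ₂) * tu2Block q η μ₁ μ₂ τ₁ τ₂ ∧
    tu2Block q η μ₁ μ₂ (q * τ₁) (q * τ₂) = μ₁ * μ₂ * tu2Block q η μ₁ μ₂ τ₁ τ₂ := by
  have hF := tu2VortexSum_qDifference (μ₁ := μ₁) hq0 hq hη hμ₂ hμ hdom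
  simp only [tu2Block_eq, thetaFn_mul_q_mul_div (inv_ne_zero hη) hμ₁ hτ₁ hq0 hq,
    thetaFn_mul_q_mul_div hη hμ₂ hτ₂ hq0 hq, mul_div_mul_left _ _ hq0, mul_div_assoc q τ₁,
    div_mul_eq_div_div_swap τ₁ q τ₂]
  generalize thetaFn (η⁻¹ * τ₁) q / thetaFn (μ₁ * τ₁) q = r₁
  generalize thetaFn (η * τ₂) q / thetaFn (μ₂ * τ₂) q = r₂
  have hτ : τ₁ - τ₂ ≠ 0 := sub_ne_zero.mpr hττ
  constructor
  · linear_combination (norm := skip) (r₁ * r₂ * τ₂ / (τ₁ - τ₂)) * hF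
    field_simp
    ring
  · field_simp

/-- The theta-dressed holomorphic block of `T[U(2)]` is an eigenfunction of the
two quantized two-body trigonometric Ruijsenaars–Schneider Hamiltonians, with
eigenvalues `μ₁ + μ₂` and `μ₁μ₂`. -/
theorem tu2_block_tRS_eigenfunction (q η μ₁ μ₂ τ₁ τ₂ : ℂ)
    (hq0 : q ≠ 0) (hq : ‖q‖ < 1) (hη : η ≠ 0)
    (hμ₁ : μ₁ ≠ 0) (hμ₂ : μ₂ ≠ 0) (hτ₁ : τ₁ ≠ 0) (hτ₂ : τ₂ ≠ 0)
    (hμ : ∀ k : ℕ, 1 ≤ k → μ₂ ≠ q ^ k * μ₁) (hττ : τ₁ ≠ τ₂)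
    (hdom : ‖τ₁ / τ₂‖ < ‖η ^ 2‖)
    (hθ1 : thetaFn (μ₁ * τ₁) q ≠ 0) (hθ2 : thetaFn (μ₂ * τ₂) q ≠ 0) :
    (η * τ₁ - η⁻¹ * τ₂) / (τ₁ - τ₂) * tu2Block q η μ₁ μ₂ (q * τ₁) τ₂ +
        (η * τ₂ - η⁻¹ * τ₁) / (τ₂ - τ₁) * tu2Block q η μ₁ μ₂ τ₁ (q * τ₂) =
      (μ₁ + μ₂) * tu2Block q η μ₁ μ₂ τ₁ τ₂ ∧
    tu2Block q η μ₁ μ₂ (q * τ₁) (q * τ₂) = μ₁ * μ₂ * tu2Block q η μ₁ μ₂ τ₁ τ₂ :=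
  tu2_block_tRS_eigenfunction_general q η μ₁ μ₂ τ₁ τ₂ hq0 hq hη hμ₁ hμ₂ hτ₁ hτ₂ hμ hττ hdom
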